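/- For μ > 0, ν ∈ ℝ, and l a nonnegative integer, the function φ̄_l(x,y,z) = D_l(ζ) e^{iμz} e^{iνy} with ζ = √(2/μ)(μx+ν) and D_l(ζ) = e^{−ζ²/4} H_l(ζ) satisfies χ₁ φ̄_l = −√(μ/2)(φ̄_{l+1} − l φ̄_{l−1}), χ₂ φ̄_l = i√(μ/2)(φ̄_{l+1} + l φ̄_{l−1}), and χ₃ φ̄_l = iμ φ̄_l, where χ₁ = ∂_x, χ₂ = ∂_y + x∂_z, χ₃ = ∂_z (with the convention φ̄_{−1} = 0). -/

import Mathlib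

noncomputable def hermiteR (l : ℕ) (z : ℝ) : ℝ :=
  Polynomial.aeval z (Polynomial.hermite l)

noncomputable def weberD (l : ℕ) (z : ℝ) : ℝ :=
  Real.exp (-z ^ 2 / 4) * hermiteR l z

noncomputable def chi1 (f : ℝ × ℝ × ℝ → ℂ) (p : ℝ × ℝ × ℝ) : ℂ :=
  fderiv ℝ f p (1, 0, 0)

noncomputable def chi2 (f : ℝ × ℝ × ℝ → ℂ) (p : ℝ × ℝ × ℝ) : ℂ :=
  fderiv ℝ f p (0, 1, 0) + p.1 * fderiv ℝ f p (0, 0, 1)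

noncomputable def chi3 (f : ℝ × ℝ × ℝ → ℂ) (p : ℝ × ℝ × ℝ) : ℂ :=
  fderiv ℝ f p (0, 0, 1)

/-- The mode function φ̄_l on ℝ³ (with φ̄ indexed over ℤ; φ̄_{-1} = 0 by the
    coefficient convention below, using ℕ indices and truncated subtraction). -/
noncomputable def phibar (μ ν : ℝ) (l : ℕ) (p : ℝ × ℝ × ℝ) : ℂ :=
  (weberD l (Real.sqrt (2 / μ) * (μ * p.1 + ν)) : ℂ) *
    Complex.exp (Complex.I * μ * p.2.2) * Complex.exp (Complex.I * ν * p.2.1)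

/-!
Only the first factor of `φ̄_l` depends on `x`, and only the exponentials depend on `y` and `z`.
By the chain rule, `∂_x φ̄_l` is `√(2/μ) μ = 2√(μ/2)` times `D_l'(ζ) = -(D_{l+1} - l D_{l-1})/2`.
The exponentials give `χ₂ φ̄_l = i(μx + ν) φ̄_l = i√(μ/2) ζ φ̄_l`, and `ζ D_l = D_{l+1} + l D_{l-1}`.
Both recurrences for `D_l` come from `H_{l+1} = ζ H_l - H_l'` and `H_l' = l H_{l-1}`.
-/

open Polynomial in
theorem Polynomial.derivative_hermite_succ (n : ℕ) :
    derivative (hermite (n + 1)) = (n + 1 : ℤ[X]) * hermite n := by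
  induction n with
  | zero => simp [hermite_succ]
  | succ n ih =>
    rw [hermite_succ, derivative_sub, derivative_mul, derivative_X, one_mul, ih,
      derivative_mul, hermite_succ n]
    simp only [derivative_add, derivative_natCast, derivative_one, add_zero, zero_mul, zero_add]
    push_cast
    ring

open Polynomial in
theorem Polynomial.derivative_hermite (n : ℕ) :
    derivative (hermite n) = (n : ℤ[X]) * hermite (n - 1) := by
  cases n with
  | zero => simp
  | succ n => simpa using derivative_hermite_succ n

theorem hermiteR_succ (l : ℕ) (z : ℝ) :
    hermiteR (l + 1) z = z * hermiteR l z - l * hermiteR (l - 1) z := by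
  simp [hermiteR, Polynomial.hermite_succ, Polynomial.derivative_hermite]

theorem hasDerivAt_hermiteR (l : ℕ) (z : ℝ) :
    HasDerivAt (hermiteR l) (l * hermiteR (l - 1) z) z := by
  have h := Polynomial.hasDerivAt_aeval (Polynomial.hermite l) z
  rwa [Polynomial.derivative_hermite, map_mul, map_natCast] at h

theorem mul_weberD (l : ℕ) (z : ℝ) :
    z * weberD l z = weberD (l + 1) z + l * weberD (l - 1) z := by
  simp only [weberD, hermiteR_succ]
  ring

theorem hasDerivAt_weberD (l : ℕ) (z : ℝ) :
    HasDerivAt (weberD l) (-(1 / 2) * (weberD (l + 1) z - l * weberD (l - 1) z)) z := by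
  have hgauss : HasDerivAt (fun z : ℝ => Real.exp (-z ^ 2 / 4))
      (Real.exp (-z ^ 2 / 4) * (-z / 2)) z :=
    ((hasDerivAt_pow 2 z).neg.div_const 4 |>.congr_deriv (by ring)).exp
  refine (hgauss.mul (hasDerivAt_hermiteR l z)).congr_deriv ?_
  simp only [weberD, hermiteR_succ]
  ring

theorem sqrt_half_mul_sqrt_two_div {μ : ℝ} (hμ : 0 < μ) :
    √(μ / 2) * √(2 / μ) = 1 := by
  rw [← Real.sqrt_mul (by positivity), show μ / 2 * (2 / μ) = 1 by field_simp, Real.sqrt_one]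

theorem sqrt_two_div_mul_self {μ : ℝ} (hμ : 0 < μ) :
    √(2 / μ) * μ = 2 * √(μ / 2) := by
  calc √(2 / μ) * μ = 2 * √(μ / 2) ^ 2 * √(2 / μ) := by
        rw [Real.sq_sqrt (by positivity)]; ring
    _ = 2 * √(μ / 2) * (√(μ / 2) * √(2 / μ)) := by ring
    _ = 2 * √(μ / 2) := by rw [sqrt_half_mul_sqrt_two_div hμ, mul_one]

theorem hasDerivAt_cexp_const_mul (c : ℂ) (t : ℝ) :
    HasDerivAt (fun s : ℝ => Complex.exp (c * s)) (c * Complex.exp (c * t)) t := by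
  simpa [mul_comm] using ((hasDerivAt_id t).ofReal_comp.const_mul c).cexp

theorem fderiv_mul_mul_apply {a b c : ℝ → ℂ} {a' b' c' : ℂ} {p : ℝ × ℝ × ℝ}
    (ha : HasDerivAt a a' p.1) (hb : HasDerivAt b b' p.2.2) (hc : HasDerivAt c c' p.2.1)
    (v : ℝ × ℝ × ℝ) :
    fderiv ℝ (fun q : ℝ × ℝ × ℝ => a q.1 * b q.2.2 * c q.2.1) p v =
      v.1 * a' * b p.2.2 * c p.2.1 + a p.1 * (v.2.2 * b') * c p.2.1 +
        a p.1 * b p.2.2 * (v.2.1 * c') := by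
  have hx := (hasDerivAt_iff_hasFDerivAt.1 ha).comp p hasFDerivAt_fst
  have hz := (hasDerivAt_iff_hasFDerivAt.1 hb).comp p (hasFDerivAt_snd.comp p hasFDerivAt_snd)
  have hy := (hasDerivAt_iff_hasFDerivAt.1 hc).comp p (hasFDerivAt_fst.comp p hasFDerivAt_snd)
  have h : HasFDerivAt (fun q : ℝ × ℝ × ℝ => a q.1 * b q.2.2 * c q.2.1) _ p :=
    (hx.mul hz).mul hy
  rw [h.fderiv]
  simp only [Pi.mul_apply, Function.comp_apply, smul_add, add_apply,
    smul_apply, ContinuousLinearMap.comp_apply, ContinuousLinearMap.coe_snd',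
    ContinuousLinearMap.coe_fst', ContinuousLinearMap.toSpanSingleton_apply, Complex.real_smul,
    smul_eq_mul]
  ring

section phibar

variable {μ : ℝ} (ν : ℝ) (l : ℕ)

theorem hasDerivAt_weberD_comp_affine (hμ : 0 < μ) (x : ℝ) :
    HasDerivAt (fun x : ℝ => weberD l (√(2 / μ) * (μ * x + ν)))
      (-√(μ / 2) * (weberD (l + 1) (√(2 / μ) * (μ * x + ν)) -
        l * weberD (l - 1) (√(2 / μ) * (μ * x + ν)))) x := by
  have hζ : HasDerivAt (fun x : ℝ => √(2 / μ) * (μ * x + ν)) (√(2 / μ) * μ) x := by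
    simpa using (((hasDerivAt_id x).const_mul μ).add_const ν).const_mul √(2 / μ)
  refine ((hasDerivAt_weberD l _).comp x hζ).congr_deriv ?_
  rw [sqrt_two_div_mul_self hμ]
  ring

theorem fderiv_phibar_apply (hμ : 0 < μ) (p v : ℝ × ℝ × ℝ) :
    fderiv ℝ (phibar μ ν l) p v =
      v.1 * (-√(μ / 2) * (phibar μ ν (l + 1) p - l * phibar μ ν (l - 1) p)) +
        (v.2.2 * (Complex.I * μ) + v.2.1 * (Complex.I * ν)) * phibar μ ν l p := by
  refine (fderiv_mul_mul_apply (hasDerivAt_weberD_comp_affine ν l hμ p.1).ofReal_comp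
    (hasDerivAt_cexp_const_mul _ _) (hasDerivAt_cexp_const_mul _ _) v).trans ?_
  simp only [phibar]
  push_cast
  ring

theorem affine_mul_phibar (hμ : 0 < μ) (p : ℝ × ℝ × ℝ) :
    (μ * p.1 + ν) * phibar μ ν l p =
      √(μ / 2) * (phibar μ ν (l + 1) p + l * phibar μ ν (l - 1) p) := by
  have hζ : μ * p.1 + ν = √(μ / 2) * (√(2 / μ) * (μ * p.1 + ν)) := by
    rw [← mul_assoc, sqrt_half_mul_sqrt_two_div hμ, one_mul]
  have hrec : (μ * p.1 + ν) * weberD l (√(2 / μ) * (μ * p.1 + ν)) =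
      √(μ / 2) * (weberD (l + 1) (√(2 / μ) * (μ * p.1 + ν)) +
        l * weberD (l - 1) (√(2 / μ) * (μ * p.1 + ν))) := by
    nth_rw 1 [hζ]
    rw [mul_assoc, mul_weberD]
  have hrecℂ := congrArg ((↑) : ℝ → ℂ) hrec
  push_cast at hrecℂ
  simp only [phibar]
  linear_combination (Complex.exp (Complex.I * μ * p.2.2) * Complex.exp (Complex.I * ν * p.2.1)) *
    hrecℂ

end phibar

theorem phibar_chi_relations (μ ν : ℝ) (hμ : 0 < μ) (l : ℕ) (p : ℝ × ℝ × ℝ) :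
    chi1 (phibar μ ν l) p =
      -(Real.sqrt (μ / 2) : ℂ) * (phibar μ ν (l + 1) p - l * phibar μ ν (l - 1) p) ∧
    chi2 (phibar μ ν l) p =
      Complex.I * (Real.sqrt (μ / 2) : ℂ) *
        (phibar μ ν (l + 1) p + l * phibar μ ν (l - 1) p) ∧
    chi3 (phibar μ ν l) p = Complex.I * μ * phibar μ ν l p := by
  refine ⟨?_, ?_, ?_⟩
  · simp [chi1, fderiv_phibar_apply ν l hμ]
  · rw [chi2, fderiv_phibar_apply ν l hμ, fderiv_phibar_apply ν l hμ]
    push_cast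
    linear_combination Complex.I * affine_mul_phibar ν l hμ p
  · simp [chi3, fderiv_phibar_apply ν l hμ]
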